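/- Consider $x(t+1) = f(x(t), v(t))$ with constraint set $\mathcal{C}$ and maximal output admissible set $O_\infty$ (for constant commands). Suppose a sequence $(v(t))_{t \geq 0}$ and trajectory $(x(t))$ with $x(t+1) = f(x(t), v(t))$ satisfy: $(x(0), v(0)) \in O_\infty$, and for every $t \geq 1$, either $(x(t), v(t)) \in O_\infty$ or $v(t) = v(t-1)$. Then $(x(t), v(t)) \in O_\infty$ for all $t \geq 0$, and in particular $(x(t), v(t)) \in \mathcal{C}$ for all $t \geq 0$. -/
import Mathlib

/-- Maximal output admissible set for constant commands. -/
def Oinf {n m : ℕ} (f : (Fin n → ℝ) → (Fin m → ℝ) → (Fin n → ℝ))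
    (C : Set ((Fin n → ℝ) × (Fin m → ℝ))) : Set ((Fin n → ℝ) × (Fin m → ℝ)) :=
  {p | ∀ t : ℕ, ((fun x => f x p.2)^[t] p.1, p.2) ∈ C}

lemma Oinf_step {n m : ℕ} (f : (Fin n → ℝ) → (Fin m → ℝ) → (Fin n → ℝ))
    (C : Set ((Fin n → ℝ) × (Fin m → ℝ))) {x : Fin n → ℝ} {v : Fin m → ℝ}
    (h : (x, v) ∈ Oinf f C) : (f x v, v) ∈ Oinf f C := by
  intro t
  have := h (t + 1)
  simpa [Function.iterate_succ_apply] using this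

/-- Constraint satisfaction for the modified CG hold logic:
accept only if in `O∞`, otherwise hold the previous command. -/
theorem modified_cg_constraints {n m : ℕ}
    (f : (Fin n → ℝ) → (Fin m → ℝ) → (Fin n → ℝ))
    (C : Set ((Fin n → ℝ) × (Fin m → ℝ)))
    (x : ℕ → (Fin n → ℝ)) (v : ℕ → (Fin m → ℝ))
    (hdyn : ∀ t : ℕ, x (t + 1) = f (x t) (v t))
    (h0 : (x 0, v 0) ∈ Oinf f C)
    (hlogic : ∀ t : ℕ, (x (t + 1), v (t + 1)) ∈ Oinf f C ∨ v (t + 1) = v t) :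
    (∀ t : ℕ, (x t, v t) ∈ Oinf f C) ∧ (∀ t : ℕ, (x t, v t) ∈ C) := by
  have hmain : ∀ t : ℕ, (x t, v t) ∈ Oinf f C := by
    intro t
    induction t with
    | zero => exact h0
    | succ t ih =>
      rcases hlogic t with h | h
      · exact h
      · rw [h, hdyn t]
        exact Oinf_step f C ih
  exact ⟨hmain, fun t => by simpa using hmain t 0⟩
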